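/- In a C-category, if X is contractible or the cofibration i : B ↣ CA is contractible (both B and A contractible), then for f₀, f₁ : CA → X, f₀ ≃ f₁ rel. i if and only if f₀i = f₁i. -/

import Mathlib

set_option linter.unusedVariables false
/-!
Formalization of "Generalized Homotopy theory in Categories with a Natural Cone"
(Díaz, García Calcines).  A `CCat 𝒞` packages the data of a category with a natural
cone: a class of cofibrations, a cone functor `C`, natural transformations
`κ : 1 → C` and `ρ : CC → C`, together with chosen cofibrated pushouts, satisfying
the axioms C1–C4 of the paper.
-/

open CategoryTheory CategoryTheory.Limits

universe v u

/-- A category with a natural cone (C-category). -/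
structure CCat (𝒞 : Type u) [Category.{v} 𝒞] where
  /-- the class of cofibrations -/
  cof : ∀ {X Y : 𝒞}, (X ⟶ Y) → Prop
  /-- the cone functor -/
  cone : 𝒞 ⥤ 𝒞
  /-- the inclusion `κ : 1 → C` -/
  κ : 𝟭 𝒞 ⟶ cone
  /-- the projection `ρ : CC → C` -/
  ρ : cone ⋙ cone ⟶ cone
  -- C1, cone axiom
  ρ_κ_cone : ∀ X : 𝒞, κ.app (cone.obj X) ≫ ρ.app X = 𝟙 (cone.obj X)
  ρ_cone_κ : ∀ X : 𝒞, cone.map (κ.app X) ≫ ρ.app X = 𝟙 (cone.obj X)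
  ρ_assoc : ∀ X : 𝒞, ρ.app (cone.obj X) ≫ ρ.app X = cone.map (ρ.app X) ≫ ρ.app X
  -- C2, pushout axiom: chosen pushouts of cofibrations along arbitrary morphisms
  P : ∀ {B A X : 𝒞} (i : B ⟶ A) (f : B ⟶ X), cof i → 𝒞
  Pbar : ∀ {B A X : 𝒞} (i : B ⟶ A) (f : B ⟶ X) (hi : cof i), A ⟶ P i f hi
  Pincl : ∀ {B A X : 𝒞} (i : B ⟶ A) (f : B ⟶ X) (hi : cof i), X ⟶ P i f hi
  P_isPushout : ∀ {B A X : 𝒞} (i : B ⟶ A) (f : B ⟶ X) (hi : cof i),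
    IsPushout i f (Pbar i f hi) (Pincl i f hi)
  cof_Pincl : ∀ {B A X : 𝒞} (i : B ⟶ A) (f : B ⟶ X) (hi : cof i), cof (Pincl i f hi)
  cone_isPushout : ∀ {B A X : 𝒞} (i : B ⟶ A) (f : B ⟶ X) (hi : cof i),
    IsPushout (cone.map i) (cone.map f) (cone.map (Pbar i f hi)) (cone.map (Pincl i f hi))
  -- C3, cofibration axiom
  cof_id : ∀ X : 𝒞, cof (𝟙 X)
  cof_κ : ∀ X : 𝒞, cof (κ.app X)
  cof_comp : ∀ {X Y Z : 𝒞} (f : X ⟶ Y) (g : Y ⟶ Z), cof f → cof g → cof (f ≫ g)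
  /-- nullhomotopy extension property: a retraction for the cone of each cofibration -/
  nep : ∀ {B A : 𝒞} (i : B ⟶ A), cof i →
    ∃ r : cone.obj A ⟶ cone.obj B, cone.map i ≫ r = 𝟙 (cone.obj B)
  -- C4, relative cone axiom: `i₁ = {Ci, κ} : Σ^i → CA` is a cofibration
  cof_rel : ∀ {B A : 𝒞} (i : B ⟶ A), cof i →
    cof ((P_isPushout (κ.app B) i (cof_κ B)).desc (cone.map i) (κ.app A)
      (by simpa using (κ.naturality i).symm))

namespace CCat

variable {𝒞 : Type u} [Category.{v} 𝒞]

/-- The relative cone `Σ^i = P{κ, i}` of a morphism `i : B ⟶ A`. -/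
def SigmaObj (D : CCat 𝒞) {B A : 𝒞} (i : B ⟶ A) : 𝒞 :=
  D.P (D.κ.app B) i (D.cof_κ B)

/-- The leg `CB ⟶ Σ^i` of the relative cone. -/
def sigInl (D : CCat 𝒞) {B A : 𝒞} (i : B ⟶ A) : D.cone.obj B ⟶ D.SigmaObj i :=
  D.Pbar (D.κ.app B) i (D.cof_κ B)

/-- The leg `A ⟶ Σ^i` of the relative cone (the induced cofibration `κ̄`). -/
def sigInr (D : CCat 𝒞) {B A : 𝒞} (i : B ⟶ A) : A ⟶ D.SigmaObj i :=
  D.Pincl (D.κ.app B) i (D.cof_κ B)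

/-- The morphism `i₁ = {Ci, κ} : Σ^i ⟶ CA`. -/
noncomputable def i1 (D : CCat 𝒞) {B A : 𝒞} (i : B ⟶ A) : D.SigmaObj i ⟶ D.cone.obj A :=
  (D.P_isPushout (D.κ.app B) i (D.cof_κ B)).desc (D.cone.map i) (D.κ.app A)
    (by simpa using (D.κ.naturality i).symm)

theorem cof_i1 (D : CCat 𝒞) {B A : 𝒞} (i : B ⟶ A) (hi : D.cof i) : D.cof (D.i1 i) :=
  D.cof_rel i hi

/-- Iterated cone `CⁿA`. -/
def cpow (D : CCat 𝒞) (A : 𝒞) : ℕ → 𝒞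
  | 0 => A
  | n + 1 => D.cone.obj (cpow D A n)

/-- Iterated projection `ρⁿ : Cⁿ⁺¹A ⟶ CA`. -/
def rpow (D : CCat 𝒞) (A : 𝒞) : ∀ n : ℕ, D.cpow A (n + 1) ⟶ D.cone.obj A
  | 0 => 𝟙 _
  | n + 1 => D.ρ.app (D.cpow A n) ≫ rpow D A n

/-- `Cⁿf` on iterated cones. -/
def cpowMap (D : CCat 𝒞) {A A' : 𝒞} (f : A ⟶ A') : ∀ n : ℕ, D.cpow A n ⟶ D.cpow A' n
  | 0 => f
  | n + 1 => D.cone.map (cpowMap D f n)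

/-- `Cⁿκ_A : CⁿA ⟶ Cⁿ⁺¹A`. -/
def cpowKappa (D : CCat 𝒞) (A : 𝒞) : ∀ n : ℕ, D.cpow A n ⟶ D.cpow A (n + 1)
  | 0 => D.κ.app A
  | n + 1 => D.cone.map (cpowKappa D A n)

/-- The iterated relative cone construction `i_n` for `i : B ⟶ CA`
(`i_0 = i`, `i_{n+1} = (i_n)₁`), together with its domain. -/
noncomputable def iterCof1 (D : CCat 𝒞) {B A : 𝒞} (i : B ⟶ D.cone.obj A) :
    ∀ n : ℕ, Σ S : 𝒞, S ⟶ D.cone.obj (D.cpow A n)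
  | 0 => ⟨B, i⟩
  | n + 1 => ⟨D.SigmaObj (iterCof1 D i n).2, D.i1 (iterCof1 D i n).2⟩

theorem cof_iterCof1 (D : CCat 𝒞) {B A : 𝒞} (i : B ⟶ D.cone.obj A) (hi : D.cof i) :
    ∀ n : ℕ, D.cof (D.iterCof1 i n).2
  | 0 => hi
  | n + 1 => D.cof_i1 _ (cof_iterCof1 D i hi n)

/-- The iterated relative cone construction for `i : B ⟶ C(CA)`, keeping track of two
outer cones. -/
noncomputable def iterCof2 (D : CCat 𝒞) {B A : 𝒞} (i : B ⟶ D.cone.obj (D.cone.obj A)) :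
    ∀ n : ℕ, Σ S : 𝒞, S ⟶ D.cone.obj (D.cone.obj (D.cpow A n))
  | 0 => ⟨B, i⟩
  | n + 1 => ⟨D.SigmaObj (iterCof2 D i n).2, D.i1 (iterCof2 D i n).2⟩

theorem cof_iterCof2 (D : CCat 𝒞) {B A : 𝒞} (i : B ⟶ D.cone.obj (D.cone.obj A))
    (hi : D.cof i) : ∀ n : ℕ, D.cof (D.iterCof2 i n).2
  | 0 => hi
  | n + 1 => D.cof_i1 _ (cof_iterCof2 D i hi n)

/-- A morphism `f` is nullhomotopic if it extends over `κ`. -/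
def Nullhomotopic (D : CCat 𝒞) {X Y : 𝒞} (f : X ⟶ Y) : Prop :=
  ∃ F : D.cone.obj X ⟶ Y, D.κ.app X ≫ F = f

/-- An object is contractible when its identity is nullhomotopic. -/
def Contractible (D : CCat 𝒞) (X : 𝒞) : Prop :=
  D.Nullhomotopic (𝟙 X)

/-- `F : C²A ⟶ X` is a homotopy from `f₀` to `f₁` relative to `i : B ⟶ CA`, i.e.
`F` is an extension of `{f₀ρ(Ci), f₁}` over `i₁` (expressed on the legs of `Σ^i`). -/
def IsRelHomotopy (D : CCat 𝒞) {B A X : 𝒞} (i : B ⟶ D.cone.obj A)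
    (f₀ f₁ : D.cone.obj A ⟶ X) (F : D.cone.obj (D.cone.obj A) ⟶ X) : Prop :=
  D.cone.map i ≫ F = D.cone.map i ≫ D.ρ.app A ≫ f₀ ∧ D.κ.app (D.cone.obj A) ≫ F = f₁

/-- `f₀ ≃ f₁` rel `i`. -/
def HomotopicRel (D : CCat 𝒞) {B A X : 𝒞} (i : B ⟶ D.cone.obj A)
    (f₀ f₁ : D.cone.obj A ⟶ X) : Prop :=
  ∃ F, D.IsRelHomotopy i f₀ f₁ F

/-- `μ : C²A ⟶ CP{i,i}` is an extension of `κ(ρ(Ci) ∪ 1)` relative to `i₁`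
(expressed on the legs of `Σ^i`). -/
def IsMu (D : CCat 𝒞) {B A : 𝒞} (i : B ⟶ D.cone.obj A) (hi : D.cof i)
    (μ : D.cone.obj (D.cone.obj A) ⟶ D.cone.obj (D.P i i hi)) : Prop :=
  D.cone.map i ≫ μ =
      D.cone.map i ≫ D.ρ.app A ≫ D.Pbar i i hi ≫ D.κ.app (D.P i i hi) ∧
    D.κ.app (D.cone.obj A) ≫ μ = D.Pincl i i hi ≫ D.κ.app (D.P i i hi)

/-- `K = {u, v} : CP{i,i} ⟶ X` (expressed on the legs of `CP{i,i} = P{Ci,Ci}`). -/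
def IsQDesc (D : CCat 𝒞) {B A X : 𝒞} (i : B ⟶ D.cone.obj A) (hi : D.cof i)
    (u v : D.cone.obj (D.cone.obj A) ⟶ X) (K : D.cone.obj (D.P i i hi) ⟶ X) : Prop :=
  D.cone.map (D.Pbar i i hi) ≫ K = u ∧ D.cone.map (D.Pincl i i hi) ≫ K = v

/-- `R = F̄ = {F, f₀ρ}μ`, the inverse operation of the homotopy groupoid. -/
def IsBar (D : CCat 𝒞) {B A X : 𝒞} (i : B ⟶ D.cone.obj A) (hi : D.cof i)
    (μ : D.cone.obj (D.cone.obj A) ⟶ D.cone.obj (D.P i i hi))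
    (f₀ : D.cone.obj A ⟶ X) (F R : D.cone.obj (D.cone.obj A) ⟶ X) : Prop :=
  ∃ K, D.IsQDesc i hi F (D.ρ.app A ≫ f₀) K ∧ R = μ ≫ K

/-- `S = F * G = {F̄, G}μ`, the composition operation of the homotopy groupoid. -/
def IsStar (D : CCat 𝒞) {B A X : 𝒞} (i : B ⟶ D.cone.obj A) (hi : D.cof i)
    (μ : D.cone.obj (D.cone.obj A) ⟶ D.cone.obj (D.P i i hi))
    (f₀ : D.cone.obj A ⟶ X) (F G S : D.cone.obj (D.cone.obj A) ⟶ X) : Prop :=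
  ∃ R K, D.IsBar i hi μ f₀ F R ∧ D.IsQDesc i hi R G K ∧ S = μ ≫ K

end CCat

namespace CCat

variable {𝒞 : Type u} [Category.{v} 𝒞]

lemma kappa_nat' (D : CCat 𝒞) {X Y : 𝒞} (f : X ⟶ Y) :
    f ≫ D.κ.app Y = D.κ.app X ≫ D.cone.map f := by
  simpa using D.κ.naturality f

lemma kappa_nat_assoc (D : CCat 𝒞) {X Y : 𝒞} (f : X ⟶ Y) {T : 𝒞} (t : D.cone.obj Y ⟶ T) :
    f ≫ D.κ.app Y ≫ t = D.κ.app X ≫ D.cone.map f ≫ t := by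
  rw [← Category.assoc, D.kappa_nat', Category.assoc]

lemma ρ_κ_cone_assoc (D : CCat 𝒞) (X : 𝒞) {T : 𝒞} (t : D.cone.obj X ⟶ T) :
    D.κ.app (D.cone.obj X) ≫ D.ρ.app X ≫ t = t := by
  rw [← Category.assoc, D.ρ_κ_cone]; simp

lemma ρ_cone_κ_assoc (D : CCat 𝒞) (X : 𝒞) {T : 𝒞} (t : D.cone.obj X ⟶ T) :
    D.cone.map (D.κ.app X) ≫ D.ρ.app X ≫ t = t := by
  rw [← Category.assoc, D.ρ_cone_κ]; simp

/-- A nullhomotopic map extends along any cofibration. -/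
lemma extend_of_null' (D : CCat 𝒞) {Y Z X : 𝒞} (j : Y ⟶ Z) (hj : D.cof j)
    {g : Y ⟶ X} (G : D.cone.obj Y ⟶ X) (hG : D.κ.app Y ≫ G = g) :
    ∃ f : Z ⟶ X, j ≫ f = g := by
  obtain ⟨r, hr⟩ := D.nep j hj
  refine ⟨D.κ.app Z ≫ r ≫ G, ?_⟩
  calc j ≫ D.κ.app Z ≫ r ≫ G = D.κ.app Y ≫ D.cone.map j ≫ r ≫ G :=
        D.kappa_nat_assoc j (r ≫ G)
    _ = D.κ.app Y ≫ (D.cone.map j ≫ r) ≫ G := by rw [Category.assoc]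
    _ = D.κ.app Y ≫ G := by rw [hr, Category.id_comp]
    _ = g := hG

lemma Pbar_i1 (D : CCat 𝒞) {B A : 𝒞} (i : B ⟶ A) :
    D.Pbar (D.κ.app B) i (D.cof_κ B) ≫ D.i1 i = D.cone.map i := by
  unfold i1
  exact (D.P_isPushout _ _ _).inl_desc _ _ _

lemma Pincl_i1 (D : CCat 𝒞) {B A : 𝒞} (i : B ⟶ A) :
    D.Pincl (D.κ.app B) i (D.cof_κ B) ≫ D.i1 i = D.κ.app A := by
  unfold i1
  exact (D.P_isPushout _ _ _).inr_desc _ _ _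

/-- The homotopy addition map `μ` always exists for a cofibration. -/
lemma exists_mu' (D : CCat 𝒞) {B A : 𝒞} (i : B ⟶ D.cone.obj A) (hi : D.cof i) :
    ∃ μ, D.IsMu i hi μ := by
  have hcompat : D.κ.app B ≫ D.cone.map i ≫ D.ρ.app A ≫ D.Pbar i i hi
      = i ≫ D.Pincl i i hi := by
    rw [← D.kappa_nat_assoc i, D.ρ_κ_cone_assoc, (D.P_isPushout i i hi).w]
  set s : D.SigmaObj i ⟶ D.P i i hi :=
    (D.P_isPushout (D.κ.app B) i (D.cof_κ B)).desc
      (D.cone.map i ≫ D.ρ.app A ≫ D.Pbar i i hi) (D.Pincl i i hi) hcompat with hs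
  obtain ⟨μ, hμ⟩ := D.extend_of_null' (D.i1 i) (D.cof_i1 i hi)
    (g := s ≫ D.κ.app (D.P i i hi)) (D.cone.map s) (D.kappa_nat' s).symm
  refine ⟨μ, ?_, ?_⟩
  · calc D.cone.map i ≫ μ
        = (D.Pbar (D.κ.app B) i (D.cof_κ B) ≫ D.i1 i) ≫ μ := by rw [D.Pbar_i1]
      _ = D.Pbar (D.κ.app B) i (D.cof_κ B) ≫ (D.i1 i ≫ μ) := Category.assoc _ _ _
      _ = D.Pbar (D.κ.app B) i (D.cof_κ B) ≫ s ≫ D.κ.app (D.P i i hi) :=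
          congrArg (fun t => D.Pbar (D.κ.app B) i (D.cof_κ B) ≫ t) hμ
      _ = (D.Pbar (D.κ.app B) i (D.cof_κ B) ≫ s) ≫ D.κ.app (D.P i i hi) := by
          rw [Category.assoc]
      _ = (D.cone.map i ≫ D.ρ.app A ≫ D.Pbar i i hi) ≫ D.κ.app (D.P i i hi) := by
          rw [hs, (D.P_isPushout (D.κ.app B) i (D.cof_κ B)).inl_desc]
      _ = D.cone.map i ≫ D.ρ.app A ≫ D.Pbar i i hi ≫ D.κ.app (D.P i i hi) := by
          simp only [Category.assoc]
  · calc D.κ.app (D.cone.obj A) ≫ μ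
        = (D.Pincl (D.κ.app B) i (D.cof_κ B) ≫ D.i1 i) ≫ μ := by rw [D.Pincl_i1]
      _ = D.Pincl (D.κ.app B) i (D.cof_κ B) ≫ (D.i1 i ≫ μ) := Category.assoc _ _ _
      _ = D.Pincl (D.κ.app B) i (D.cof_κ B) ≫ s ≫ D.κ.app (D.P i i hi) :=
          congrArg (fun t => D.Pincl (D.κ.app B) i (D.cof_κ B) ≫ t) hμ
      _ = (D.Pincl (D.κ.app B) i (D.cof_κ B) ≫ s) ≫ D.κ.app (D.P i i hi) := by
          rw [Category.assoc]
      _ = D.Pincl i i hi ≫ D.κ.app (D.P i i hi) := by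
          rw [hs, (D.P_isPushout (D.κ.app B) i (D.cof_κ B)).inr_desc]

/-- Homotopy rel a cofibration is symmetric. -/
lemma homotopicRel_symm' (D : CCat 𝒞) {B A X : 𝒞} (i : B ⟶ D.cone.obj A) (hi : D.cof i)
    {f₀ f₁ : D.cone.obj A ⟶ X} (h : D.HomotopicRel i f₀ f₁) :
    D.HomotopicRel i f₁ f₀ := by
  obtain ⟨F, hF1, hF2⟩ := h
  obtain ⟨μ, hμ1, hμ2⟩ := D.exists_mu' i hi
  have hK := D.cone_isPushout i i hi
  have hKl : D.cone.map (D.Pbar i i hi) ≫ hK.desc F (D.ρ.app A ≫ f₀) hF1 = F :=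
    hK.inl_desc _ _ _
  have hKr : D.cone.map (D.Pincl i i hi) ≫ hK.desc F (D.ρ.app A ≫ f₀) hF1
      = D.ρ.app A ≫ f₀ := hK.inr_desc _ _ _
  refine ⟨μ ≫ hK.desc F (D.ρ.app A ≫ f₀) hF1, ?_, ?_⟩
  · calc D.cone.map i ≫ μ ≫ hK.desc F (D.ρ.app A ≫ f₀) hF1
        = (D.cone.map i ≫ μ) ≫ hK.desc F (D.ρ.app A ≫ f₀) hF1 := by rw [Category.assoc]
      _ = (D.cone.map i ≫ D.ρ.app A ≫ D.Pbar i i hi ≫ D.κ.app (D.P i i hi)) ≫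
            hK.desc F (D.ρ.app A ≫ f₀) hF1 := by rw [hμ1]
      _ = D.cone.map i ≫ D.ρ.app A ≫ D.Pbar i i hi ≫ D.κ.app (D.P i i hi) ≫
            hK.desc F (D.ρ.app A ≫ f₀) hF1 := by simp only [Category.assoc]
      _ = D.cone.map i ≫ D.ρ.app A ≫ D.κ.app (D.cone.obj A) ≫
            D.cone.map (D.Pbar i i hi) ≫ hK.desc F (D.ρ.app A ≫ f₀) hF1 := by
          rw [D.kappa_nat_assoc]
      _ = D.cone.map i ≫ D.ρ.app A ≫ D.κ.app (D.cone.obj A) ≫ F := by rw [hKl]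
      _ = D.cone.map i ≫ D.ρ.app A ≫ f₁ := by rw [hF2]
  · calc D.κ.app (D.cone.obj A) ≫ μ ≫ hK.desc F (D.ρ.app A ≫ f₀) hF1
        = (D.κ.app (D.cone.obj A) ≫ μ) ≫ hK.desc F (D.ρ.app A ≫ f₀) hF1 := by
          rw [Category.assoc]
      _ = (D.Pincl i i hi ≫ D.κ.app (D.P i i hi)) ≫
            hK.desc F (D.ρ.app A ≫ f₀) hF1 := by rw [hμ2]
      _ = D.Pincl i i hi ≫ D.κ.app (D.P i i hi) ≫
            hK.desc F (D.ρ.app A ≫ f₀) hF1 := by rw [Category.assoc]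
      _ = D.κ.app (D.cone.obj A) ≫ D.cone.map (D.Pincl i i hi) ≫
            hK.desc F (D.ρ.app A ≫ f₀) hF1 := by rw [D.kappa_nat_assoc]
      _ = D.κ.app (D.cone.obj A) ≫ D.ρ.app A ≫ f₀ := by rw [hKr]
      _ = f₀ := D.ρ_κ_cone_assoc A f₀

/-- Homotopy rel a cofibration is transitive. -/
lemma homotopicRel_trans' (D : CCat 𝒞) {B A X : 𝒞} (i : B ⟶ D.cone.obj A) (hi : D.cof i)
    {f₀ f₁ f₂ : D.cone.obj A ⟶ X} (h01 : D.HomotopicRel i f₀ f₁)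
    (h12 : D.HomotopicRel i f₁ f₂) : D.HomotopicRel i f₀ f₂ := by
  obtain ⟨F, hF1, hF2⟩ := D.homotopicRel_symm' i hi h01
  obtain ⟨G, hG1, hG2⟩ := h12
  obtain ⟨μ, hμ1, hμ2⟩ := D.exists_mu' i hi
  have hK := D.cone_isPushout i i hi
  have compat : D.cone.map i ≫ F = D.cone.map i ≫ G := by rw [hF1, hG1]
  have hKl : D.cone.map (D.Pbar i i hi) ≫ hK.desc F G compat = F := hK.inl_desc _ _ _
  have hKr : D.cone.map (D.Pincl i i hi) ≫ hK.desc F G compat = G := hK.inr_desc _ _ _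
  refine ⟨μ ≫ hK.desc F G compat, ?_, ?_⟩
  · calc D.cone.map i ≫ μ ≫ hK.desc F G compat
        = (D.cone.map i ≫ μ) ≫ hK.desc F G compat := by rw [Category.assoc]
      _ = (D.cone.map i ≫ D.ρ.app A ≫ D.Pbar i i hi ≫ D.κ.app (D.P i i hi)) ≫
            hK.desc F G compat := by rw [hμ1]
      _ = D.cone.map i ≫ D.ρ.app A ≫ D.Pbar i i hi ≫ D.κ.app (D.P i i hi) ≫
            hK.desc F G compat := by simp only [Category.assoc]
      _ = D.cone.map i ≫ D.ρ.app A ≫ D.κ.app (D.cone.obj A) ≫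
            D.cone.map (D.Pbar i i hi) ≫ hK.desc F G compat := by rw [D.kappa_nat_assoc]
      _ = D.cone.map i ≫ D.ρ.app A ≫ D.κ.app (D.cone.obj A) ≫ F := by rw [hKl]
      _ = D.cone.map i ≫ D.ρ.app A ≫ f₀ := by rw [hF2]
  · calc D.κ.app (D.cone.obj A) ≫ μ ≫ hK.desc F G compat
        = (D.κ.app (D.cone.obj A) ≫ μ) ≫ hK.desc F G compat := by rw [Category.assoc]
      _ = (D.Pincl i i hi ≫ D.κ.app (D.P i i hi)) ≫ hK.desc F G compat := by rw [hμ2]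
      _ = D.Pincl i i hi ≫ D.κ.app (D.P i i hi) ≫ hK.desc F G compat := by
          rw [Category.assoc]
      _ = D.κ.app (D.cone.obj A) ≫ D.cone.map (D.Pincl i i hi) ≫
            hK.desc F G compat := by rw [D.kappa_nat_assoc]
      _ = D.κ.app (D.cone.obj A) ≫ G := by rw [hKr]
      _ = f₂ := hG2

end CCat

/-- if `X` is contractible or the cofibration `i : B ↣ CA` is contractible
(domain and codomain contractible), then `f₀ ≃ f₁` rel `i` iff `f₀i = f₁i`. -/
theorem stmt_7 {𝒞 : Type u} [Category.{v} 𝒞] (D : CCat 𝒞) {B A X : 𝒞}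
    (i : B ⟶ D.cone.obj A) (hi : D.cof i)
    (hc : D.Contractible X ∨ (D.Contractible B ∧ D.Contractible (D.cone.obj A)))
    (f₀ f₁ : D.cone.obj A ⟶ X) :
    D.HomotopicRel i f₀ f₁ ↔ i ≫ f₀ = i ≫ f₁ := by
  constructor
  · rintro ⟨F, hF1, hF2⟩
    calc i ≫ f₀ = i ≫ D.κ.app (D.cone.obj A) ≫ D.ρ.app A ≫ f₀ := by
          rw [D.ρ_κ_cone_assoc]
      _ = D.κ.app B ≫ D.cone.map i ≫ D.ρ.app A ≫ f₀ := D.kappa_nat_assoc i _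
      _ = D.κ.app B ≫ D.cone.map i ≫ F := by rw [hF1]
      _ = i ≫ D.κ.app (D.cone.obj A) ≫ F := (D.kappa_nat_assoc i F).symm
      _ = i ≫ f₁ := by rw [hF2]
  · intro hf
    have hPS := D.P_isPushout (D.κ.app B) i (D.cof_κ B)
    have compat_g : D.κ.app B ≫ D.cone.map i ≫ D.ρ.app A ≫ f₀ = i ≫ f₁ := by
      rw [← D.kappa_nat_assoc i, D.ρ_κ_cone_assoc, hf]
    set g := hPS.desc (D.cone.map i ≫ D.ρ.app A ≫ f₀) f₁ compat_g with hgdef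
    have hgl : D.Pbar (D.κ.app B) i (D.cof_κ B) ≫ g = D.cone.map i ≫ D.ρ.app A ≫ f₀ :=
      hPS.inl_desc _ _ _
    have hgr : D.Pincl (D.κ.app B) i (D.cof_κ B) ≫ g = f₁ := hPS.inr_desc _ _ _
    have hnull : ∃ G : D.cone.obj (D.P (D.κ.app B) i (D.cof_κ B)) ⟶ X,
        D.κ.app (D.P (D.κ.app B) i (D.cof_κ B)) ≫ G = g := by
      rcases hc with ⟨H, hH⟩ | ⟨⟨h, hh⟩, -⟩
      · refine ⟨D.cone.map g ≫ H, ?_⟩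
        rw [← D.kappa_nat_assoc g H, hH]; simp
      · -- B is contractible with contraction `h : CB ⟶ B`, `κ_B ≫ h = 𝟙`.
        have hei : D.κ.app B ≫ h ≫ i = i := by
          rw [← Category.assoc, hh]; simp
        have hM : ∀ f : D.cone.obj A ⟶ X,
            D.HomotopicRel (D.κ.app B) (D.cone.map i ≫ D.ρ.app A ≫ f) (h ≫ i ≫ f) := by
          intro f
          refine ⟨D.cone.map (h ≫ i) ≫ D.ρ.app A ≫ f, ?_, ?_⟩
          · rw [D.ρ_cone_κ_assoc, ← Functor.map_comp_assoc, hei]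
          · rw [← D.kappa_nat_assoc, D.ρ_κ_cone_assoc, Category.assoc]
        have h01 := hM f₀
        have h11 := hM f₁
        have e : h ≫ i ≫ f₁ = h ≫ i ≫ f₀ := by rw [hf]
        rw [e] at h11
        obtain ⟨M, hM1, hM2⟩ :=
          D.homotopicRel_trans' (D.κ.app B) (D.cof_κ B) h11
            (D.homotopicRel_symm' (D.κ.app B) (D.cof_κ B) h01)
        -- `M` is a homotopy rel `κ_B` from `Ci ≫ ρ ≫ f₁` to `Ci ≫ ρ ≫ f₀`.
        have hM1' : D.cone.map (D.κ.app B) ≫ M = D.cone.map i ≫ D.ρ.app A ≫ f₁ := by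
          rw [hM1, D.ρ_cone_κ_assoc]
        have hKp := D.cone_isPushout (D.κ.app B) i (D.cof_κ B)
        have hGl : D.cone.map (D.Pbar (D.κ.app B) i (D.cof_κ B)) ≫
            hKp.desc M (D.ρ.app A ≫ f₁) hM1' = M := hKp.inl_desc _ _ _
        have hGr : D.cone.map (D.Pincl (D.κ.app B) i (D.cof_κ B)) ≫
            hKp.desc M (D.ρ.app A ≫ f₁) hM1' = D.ρ.app A ≫ f₁ := hKp.inr_desc _ _ _
        refine ⟨hKp.desc M (D.ρ.app A ≫ f₁) hM1', ?_⟩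
        apply hPS.hom_ext
        · rw [D.kappa_nat_assoc, hGl, hM2, hgl]
        · rw [D.kappa_nat_assoc, hGr, hgr, D.ρ_κ_cone_assoc]
    obtain ⟨G, hG⟩ := hnull
    obtain ⟨F, hF⟩ := D.extend_of_null' (D.i1 i) (D.cof_i1 i hi) G hG
    refine ⟨F, ?_, ?_⟩
    · calc D.cone.map i ≫ F
          = (D.Pbar (D.κ.app B) i (D.cof_κ B) ≫ D.i1 i) ≫ F := by rw [D.Pbar_i1]
        _ = D.Pbar (D.κ.app B) i (D.cof_κ B) ≫ (D.i1 i ≫ F) := Category.assoc _ _ _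
        _ = D.Pbar (D.κ.app B) i (D.cof_κ B) ≫ g :=
            congrArg (fun t => D.Pbar (D.κ.app B) i (D.cof_κ B) ≫ t) hF
        _ = D.cone.map i ≫ D.ρ.app A ≫ f₀ := hgl
    · calc D.κ.app (D.cone.obj A) ≫ F
          = (D.Pincl (D.κ.app B) i (D.cof_κ B) ≫ D.i1 i) ≫ F := by rw [D.Pincl_i1]
        _ = D.Pincl (D.κ.app B) i (D.cof_κ B) ≫ (D.i1 i ≫ F) := Category.assoc _ _ _
        _ = D.Pincl (D.κ.app B) i (D.cof_κ B) ≫ g :=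
            congrArg (fun t => D.Pincl (D.κ.app B) i (D.cof_κ B) ≫ t) hF
        _ = f₁ := hgr
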